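/- For any μ > 0, the double integral over (t₁,t₂) ∈ ℝ² of μ/(π |t₂(t₁+i) + μ - i(t₁+i)|²) dt₁ dt₂ is at most πμ. In particular, it is O(μ). -/

import Mathlib

open Real MeasureTheory

/-!
For fixed `t₁` the squared modulus is a quadratic polynomial in `t₂` whose discriminant is
`-4 (μ + 1 + t₁²)²`, so the inner integral is exactly `μ / (μ + 1 + t₁²)`. The outer integral is then
`π μ / √(μ + 1)`, which is at most `π μ`.
-/

theorem integral_univ_inv_sq_add_sq {c : ℝ} (hc : 0 < c) :
    ∫ x : ℝ, (c ^ 2 + x ^ 2)⁻¹ = π / c := by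
  have hscale : ∀ x : ℝ, (c ^ 2 + x ^ 2)⁻¹ = (c ^ 2)⁻¹ * (1 + (c⁻¹ * x) ^ 2)⁻¹ := fun x => by
    field_simp
  simp_rw [hscale]
  rw [integral_const_mul, Measure.integral_comp_mul_left (fun y : ℝ => (1 + y ^ 2)⁻¹),
    integral_univ_inv_one_add_sq, inv_inv, abs_of_pos hc, smul_eq_mul]
  field_simp

theorem integral_univ_inv_quadratic {a b c : ℝ} (ha : 0 < a) (hD : 0 < 4 * a * c - b ^ 2) :
    ∫ x : ℝ, (a * x ^ 2 + b * x + c)⁻¹ = 2 * π / √(4 * a * c - b ^ 2) := by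
  set D := 4 * a * c - b ^ 2
  have hsquare (x : ℝ) :
      a * x ^ 2 + b * x + c = a * ((√D / (2 * a)) ^ 2 + (x + b / (2 * a)) ^ 2) := by
    rw [div_pow, sq_sqrt hD.le]
    field_simp
    ring
  simp_rw [hsquare, mul_inv]
  rw [integral_const_mul,
    integral_add_right_eq_self (fun x : ℝ => ((√D / (2 * a)) ^ 2 + x ^ 2)⁻¹),
    integral_univ_inv_sq_add_sq (by positivity)]
  field_simp

theorem normSq_eq_quadratic (μ t₁ t₂ : ℝ) :
    ‖(t₂ : ℂ) * (t₁ + Complex.I) + μ - Complex.I * (t₁ + Complex.I)‖ ^ 2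
      = (t₁ ^ 2 + 1) * t₂ ^ 2 + 2 * μ * t₁ * t₂ + ((μ + 1) ^ 2 + t₁ ^ 2) := by
  rw [Complex.sq_norm, Complex.normSq_apply]
  simp only [Complex.sub_re, Complex.add_re, Complex.mul_re, Complex.ofReal_re, Complex.I_re,
    Complex.ofReal_im, Complex.I_im, Complex.add_im, Complex.sub_im, Complex.mul_im]
  ring

theorem integral_div_pi_mul_norm_sq (μ t₁ : ℝ) (hμ : 0 < μ) :
    ∫ t₂ : ℝ, μ / (π * ‖(t₂ : ℂ) * (t₁ + Complex.I) + μ - Complex.I * (t₁ + Complex.I)‖ ^ 2)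
      = μ / (√(μ + 1) ^ 2 + t₁ ^ 2) := by
  simp_rw [normSq_eq_quadratic, div_eq_mul_inv μ, mul_inv, ← mul_assoc]
  have hD : 4 * (t₁ ^ 2 + 1) * ((μ + 1) ^ 2 + t₁ ^ 2) - (2 * μ * t₁) ^ 2
      = (2 * (μ + 1 + t₁ ^ 2)) ^ 2 := by ring
  rw [integral_const_mul, integral_univ_inv_quadratic (by positivity) (by rw [hD]; positivity),
    hD, sqrt_sq (by positivity), sq_sqrt (by positivity)]
  field_simp

theorem stmt_1 (μ : ℝ) (hμ : 0 < μ) :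
    (∫ t₁ : ℝ, ∫ t₂ : ℝ,
      μ / (π * ‖(t₂ : ℂ) * (t₁ + Complex.I) + μ
        - Complex.I * (t₁ + Complex.I)‖ ^ 2)) ≤ π * μ := by
  simp_rw [integral_div_pi_mul_norm_sq μ _ hμ, div_eq_mul_inv μ]
  rw [integral_const_mul, integral_univ_inv_sq_add_sq (by positivity)]
  calc μ * (π / √(μ + 1)) ≤ μ * π := by
        gcongr
        exact div_le_self pi_pos.le (one_le_sqrt.2 (by linarith))
    _ = π * μ := mul_comm μ π
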